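/- arXiv:2412.19271 — 2 statements merged into one kernel-verified Lean document; each statement's English description precedes it below -/
import Mathlib

section
/- Let T be an invertible bounded selfadjoint operator on a real Hilbert space H and set |T| = sqrt(T²). For s ∈ [0,1] define T_s = T|T|⁻¹((1-s)|T| + s·I). Then each T_s is invertible and selfadjoint, T₀ = T, and T₁ = T|T|⁻¹ is an orthogonal selfadjoint operator (a symmetry). -/
/-!
All operators involved are selfadjoint and commute pairwise: `|T|⁻¹` inherits both properties
from `|T|`, and so does `(1 - s)|T| + s`. A product of commuting selfadjoint operators is
selfadjoint, and `(T|T|⁻¹)² = T²|T|⁻² = 1`. For `s > 0` the operator `(1 - s)|T| + s` is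
coercive, `⟪((1 - s)|T| + s) x, x⟫ ≥ s‖x‖²`, hence invertible; for `s = 0` it is `|T|`.
-/

open ContinuousLinearMap

theorem Commute.of_mul_eq_one {A : Type*} [Monoid A] {a b c : A} (h : Commute a c)
    (hab : a * b = 1) (hba : b * a = 1) : Commute b c :=
  Commute.units_inv_left (u := ⟨a, b, hab, hba⟩) h

theorem IsSelfAdjoint.of_mul_eq_one {A : Type*} [Monoid A] [StarMul A] {a b : A}
    (ha : IsSelfAdjoint a) (hab : a * b = 1) : IsSelfAdjoint b := by
  have hstar : star b * a = 1 := by rw [← ha.star_eq, ← star_mul, hab, star_one]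
  exact left_inv_eq_right_inv hstar hab

theorem IsSelfAdjoint.mul_mul_of_commute {A : Type*} [Monoid A] [StarMul A] {x y z : A}
    (hx : IsSelfAdjoint x) (hy : IsSelfAdjoint y) (hz : IsSelfAdjoint z)
    (hxy : Commute x y) (hxz : Commute x z) (hyz : Commute y z) :
    IsSelfAdjoint (x * (y * z)) :=
  (hx.commute_iff ((hy.commute_iff hz).mp hyz)).mp (hxy.mul_right hxz)

theorem mul_self_eq_one_of_mul_self_eq {A : Type*} [Monoid A] {t r r' : A}
    (hsq : r * r = t * t) (htr' : Commute t r') (hrr' : r * r' = 1) :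
    (t * r') * (t * r') = 1 := by
  calc (t * r') * (t * r') = (t * t) * (r' * r') := by
        rw [mul_assoc, ← mul_assoc r', ← htr'.eq, mul_assoc, mul_assoc]
    _ = r * (r * r') * r' := by rw [← hsq]; simp only [mul_assoc]
    _ = 1 := by rw [hrr', mul_one, hrr']

section ConvexCombination

variable {A : Type*} [Ring A] [Algebra ℝ A] {r : A} (s : ℝ)

theorem Commute.smul_add_smul_one_left {t : A} (h : Commute r t) :
    Commute ((1 - s) • r + s • 1) t :=
  (h.smul_left _).add_left ((Commute.one_left t).smul_left _)

theorem IsSelfAdjoint.smul_add_smul_one [StarRing A] [StarModule ℝ A] (hr : IsSelfAdjoint r) :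
    IsSelfAdjoint ((1 - s) • r + s • 1) :=
  ((IsSelfAdjoint.all _).smul hr).add ((IsSelfAdjoint.all _).smul (IsSelfAdjoint.one A))

end ConvexCombination

section Coercive

variable {H : Type*} [NormedAddCommGroup H] [InnerProductSpace ℝ H] [CompleteSpace H]

theorem ContinuousLinearMap.isUnit_add_smul_one {a : H →L[ℝ] H}
    (ha : ∀ x, 0 ≤ inner ℝ (a x) x) {c : ℝ} (hc : 0 < c) : IsUnit (a + c • 1) := by
  refine isUnit_of_forall_le_norm_inner_map _ (c := ⟨c, hc.le⟩) hc fun x => ?_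
  have hinner : inner ℝ ((a + c • 1) x) x = inner ℝ (a x) x + c * ‖x‖ ^ 2 := by
    simp [inner_add_left, real_inner_smul_left]
  calc ‖x‖ ^ 2 * c ≤ inner ℝ ((a + c • 1) x) x := by rw [hinner]; linarith [ha x]
    _ ≤ ‖inner ℝ ((a + c • 1) x) x‖ := Real.le_norm_self _

theorem ContinuousLinearMap.isUnit_smul_add_smul_one {r : H →L[ℝ] H} (hr : IsUnit r)
    (hpos : ∀ x, 0 ≤ inner ℝ (r x) x) {s : ℝ} (hs : s ∈ Set.Icc (0 : ℝ) 1) :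
    IsUnit ((1 - s) • r + s • 1) := by
  obtain rfl | hs0 := hs.1.eq_or_lt
  · simpa using hr
  refine isUnit_add_smul_one (fun x => ?_) hs0
  rw [smul_apply, real_inner_smul_left]
  exact mul_nonneg (sub_nonneg.mpr hs.2) (hpos x)

end Coercive

/-- Let `T` be an invertible bounded selfadjoint operator on a real Hilbert space and
`R = |T|` the positive square root of `T²`, which is invertible (with inverse `R'`) and
commutes with `T`. For `s ∈ [0,1]` set `T_s = T R⁻¹ ((1-s)R + sI)`. Then each `T_s` is
invertible and selfadjoint, `T₀ = T`, and `T₁ = T R⁻¹` is an orthogonal selfadjoint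
operator, i.e. a symmetry. -/
theorem stmt_5 {H : Type*} [NormedAddCommGroup H] [InnerProductSpace ℝ H]
    [CompleteSpace H] (T T' R R' : H →L[ℝ] H)
    (hTsa : ContinuousLinearMap.adjoint T = T)
    (hTinv : T ∘L T' = 1 ∧ T' ∘L T = 1)
    (hRsa : ContinuousLinearMap.adjoint R = R)
    (hRpos : ∀ x : H, 0 ≤ inner (R x) x (𝕜 := ℝ))
    (hRsq : R ∘L R = T ∘L T)
    (hRcomm : R ∘L T = T ∘L R)
    (hRinv : R ∘L R' = 1 ∧ R' ∘L R = 1) :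
    (∀ s ∈ Set.Icc (0 : ℝ) 1,
        (∃ S : H →L[ℝ] H,
            (T ∘L R' ∘L ((1 - s) • R + s • 1)) ∘L S = 1 ∧
            S ∘L (T ∘L R' ∘L ((1 - s) • R + s • 1)) = 1) ∧
        ContinuousLinearMap.adjoint (T ∘L R' ∘L ((1 - s) • R + s • 1)) =
          T ∘L R' ∘L ((1 - s) • R + s • 1)) ∧
    T ∘L R' ∘L ((1 - (0 : ℝ)) • R + (0 : ℝ) • 1) = T ∧
    ContinuousLinearMap.adjoint (T ∘L R') = T ∘L R' ∧
    ContinuousLinearMap.adjoint (T ∘L R') ∘L (T ∘L R') = 1 ∧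
    (T ∘L R') ∘L (T ∘L R') = 1 := by
  obtain ⟨hRR', hR'R⟩ := hRinv
  have hT : IsSelfAdjoint T := isSelfAdjoint_iff'.mpr hTsa
  have hR : IsSelfAdjoint R := isSelfAdjoint_iff'.mpr hRsa
  have hR' : IsSelfAdjoint R' := hR.of_mul_eq_one hRR'
  have hRT : Commute R T := hRcomm
  have hTR' : Commute T R' := (hRT.of_mul_eq_one hRR' hR'R).symm
  have hRR'c : Commute R R' := hRR'.trans hR'R.symm
  have hsymm : IsSelfAdjoint (T * R') := (hT.commute_iff hR').mp hTR'
  refine ⟨fun s hs => ⟨?_, ?_⟩, ?_, hsymm.adjoint_eq, ?_, ?_⟩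
  · have hTunit : IsUnit T := isUnit_iff_exists.mpr ⟨T', hTinv⟩
    have hR'unit : IsUnit R' := isUnit_iff_exists.mpr ⟨R, hR'R, hRR'⟩
    have hM := isUnit_smul_add_smul_one ⟨⟨R, R', hRR', hR'R⟩, rfl⟩ hRpos hs
    exact isUnit_iff_exists.mp (hTunit.mul (hR'unit.mul hM))
  · refine (hT.mul_mul_of_commute hR' (hR.smul_add_smul_one s) hTR' ?_ ?_).adjoint_eq
    · exact (hRT.smul_add_smul_one_left s).symm
    · exact (hRR'c.smul_add_smul_one_left s).symm
  · change T * (R' * ((1 - (0 : ℝ)) • R + (0 : ℝ) • 1)) = T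
    simp [show R' * R = 1 from hR'R]
  · change adjoint (T * R') * (T * R') = 1
    rw [hsymm.adjoint_eq]
    exact mul_self_eq_one_of_mul_self_eq hRsq hTR' hRR'
  · exact mul_self_eq_one_of_mul_self_eq hRsq hTR' hRR'
end

section
/- Let H be a Hilbert space, L : ℝ → L(H) a continuous family of bounded operators, T : ℝ → GL(H) continuous, K : ℝ → K(H) a continuous family of compact operators with T_λ L_λ = I + K_λ, and C : ℝ × H → H a compact (completely continuous) map. Then the map F(λ,x) = L_λ x + C(λ,x) is proper on every closed bounded subset of ℝ × H. -/
/-!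
Write `F (l, x) = L_l x + C (l, x)`. Applying the parametrix gives
`x = T_l (F (l, x)) - T_l (C (l, x)) - K_l x`. On a bounded set `S` the parameter `l` ranges
over a compact interval, `C (l, x)` over the compact set `closure (C '' S)`, and `K_l x` over a
totally bounded set, because `l ↦ K_l` is norm-continuous and each `K_l` is compact. Hence if
`F (l, x)` ranges over a compact set `A`, then `(l, x)` lies in the continuous image of a compact
set, and `F⁻¹(A) ∩ S` is a closed subset of it.
-/

open ContinuousLinearMap Bornology Metric Set

theorem totallyBounded_image_prod_of_isCompactOperator {X 𝕜 E F : Type*} [TopologicalSpace X]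
    [NontriviallyNormedField 𝕜] [SeminormedAddCommGroup E] [NormedSpace 𝕜 E]
    [SeminormedAddCommGroup F] [NormedSpace 𝕜 F]
    {K : X → E →L[𝕜] F} (hK : Continuous K) (hKcpt : ∀ l, IsCompactOperator (K l))
    {I : Set X} (hI : IsCompact I) {B : Set E} (hB : IsBounded B) :
    TotallyBounded ((fun p : X × E => K p.1 p.2) '' (I ×ˢ B)) := by
  rw [Metric.totallyBounded_iff]
  intro ε hε
  obtain ⟨R, hR, hBR⟩ := hB.exists_pos_norm_le
  have hδ : 0 < ε / (2 * R) := by positivity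
  -- finitely many `K j` approximate every `K l`, `l ∈ I`, uniformly on `B` up to `ε / 2`
  obtain ⟨t, -, hIt⟩ := hI.elim_nhds_subcover (fun j => {l | ‖K l - K j‖ < ε / (2 * R)})
    fun j _ => (isOpen_lt (hK.sub continuous_const).norm continuous_const).mem_nhds
      (by simpa using hδ)
  have hnet (j : X) : ∃ s : Set F, s.Finite ∧ K j '' B ⊆ ⋃ y ∈ s, ball y (ε / 2) := by
    obtain ⟨Q, hQ, hBQ⟩ := (hKcpt j).image_subset_compact_of_bounded hB
    exact Metric.totallyBounded_iff.1 (hQ.totallyBounded.subset hBQ) _ (half_pos hε)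
  choose net hnet_finite hnet_cover using hnet
  refine ⟨⋃ j ∈ t, net j, t.finite_toSet.biUnion fun j _ => hnet_finite j, ?_⟩
  rintro _ ⟨⟨l, x⟩, ⟨hl, hx⟩, rfl⟩
  obtain ⟨j, hjt, hlj⟩ := mem_iUnion₂.1 (hIt hl)
  obtain ⟨y, hy, hjy⟩ := mem_iUnion₂.1 (hnet_cover j ⟨x, hx, rfl⟩)
  have hlj_x : dist (K l x) (K j x) ≤ ε / 2 := calc
    dist (K l x) (K j x) = ‖(K l - K j) x‖ := by rw [dist_eq_norm, sub_apply]
    _ ≤ ‖K l - K j‖ * ‖x‖ := le_opNorm _ _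
    _ ≤ ε / (2 * R) * R := mul_le_mul hlj.le (hBR x hx) (norm_nonneg _) hδ.le
    _ = ε / 2 := by field_simp
  refine mem_iUnion₂.2 ⟨y, mem_iUnion₂.2 ⟨j, hjt, hy⟩, ?_⟩
  calc dist (K l x) y ≤ dist (K l x) (K j x) + dist (K j x) y := dist_triangle _ _ _
    _ < ε := by linarith [mem_ball.1 hjy]

theorem eq_sub_sub_of_comp_eq_one_add {R E : Type*} [Ring R] [AddCommGroup E] [Module R E]
    [TopologicalSpace E] [IsTopologicalAddGroup E] {T L K : E →L[R] E} (h : T ∘L L = 1 + K)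
    (x c : E) : x = T (L x + c) - T c - K x := by
  have hx : T (L x) = x + K x := by simpa using DFunLike.congr_fun h x
  rw [map_add, hx]
  abel

theorem stmt_9_general {H : Type*} [NormedAddCommGroup H] [InnerProductSpace ℝ H]
    [CompleteSpace H]
    (L T K : ℝ → H →L[ℝ] H)
    (hL : Continuous L) (hT : Continuous T)
    (hK : Continuous K) (hKcpt : ∀ l : ℝ, IsCompactOperator (K l))
    (hparametrix : ∀ l : ℝ, T l ∘L L l = 1 + K l)
    (C : ℝ × H → H) (hCcont : Continuous C)
    (hCcpt : ∀ s : Set (ℝ × H), IsBounded s → IsCompact (closure (C '' s))) :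
    ∀ S : Set (ℝ × H), IsClosed S → IsBounded S →
      ∀ A : Set H, IsCompact A →
        IsCompact ((fun p : ℝ × H => L p.1 p.2 + C p) ⁻¹' A ∩ S) := by
  intro S hS hSbd A hA
  obtain ⟨R, hSR⟩ := hSbd.subset_closedBall 0
  rw [← closedBall_prod_same] at hSR
  have hF : Continuous fun p : ℝ × H => L p.1 p.2 + C p := by fun_prop
  set KB := closure ((fun p : ℝ × H => K p.1 p.2) '' (closedBall 0 R ×ˢ closedBall 0 R))
  have hKB : IsCompact KB := (totallyBounded_image_prod_of_isCompactOperator hK hKcpt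
    (isCompact_closedBall 0 R) isBounded_closedBall).closure.isCompact_of_isClosed isClosed_closure
  let Φ : ℝ × H × H × H → ℝ × H := fun q => (q.1, T q.1 q.2.1 - T q.1 q.2.2.1 - q.2.2.2)
  have hΦ : Continuous Φ := by fun_prop
  refine ((isCompact_closedBall 0 R |>.prod <| hA.prod <| (hCcpt S hSbd).prod hKB).image hΦ)
    |>.of_isClosed_subset ((hA.isClosed.preimage hF).inter hS) ?_
  rintro ⟨l, x⟩ ⟨hFx, hlx⟩
  refine ⟨(l, _, C (l, x), K l x), ⟨(hSR hlx).1, hFx, subset_closure (mem_image_of_mem C hlx),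
    subset_closure ⟨(l, x), hSR hlx, rfl⟩⟩, ?_⟩
  exact Prod.ext rfl (eq_sub_sub_of_comp_eq_one_add (hparametrix l) x (C (l, x))).symm

/-- If `L : ℝ → L(H)` is a continuous family admitting a parametrix `T : ℝ → GL(H)`
with `T_λ L_λ = I + K_λ` for a continuous family `K` of compact operators, and
`C : ℝ × H → H` is a compact (completely continuous) map, then
`F(λ,x) = L_λ x + C(λ,x)` is proper on every closed bounded subset of `ℝ × H`. -/
theorem stmt_9 {H : Type*} [NormedAddCommGroup H] [InnerProductSpace ℝ H]
    [CompleteSpace H]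
    (L T K : ℝ → H →L[ℝ] H)
    (hL : Continuous L) (hT : Continuous T)
    (hTinv : ∀ l : ℝ, ∃ S : H →L[ℝ] H, T l ∘L S = 1 ∧ S ∘L T l = 1)
    (hK : Continuous K) (hKcpt : ∀ l : ℝ, IsCompactOperator (K l))
    (hparametrix : ∀ l : ℝ, T l ∘L L l = 1 + K l)
    (C : ℝ × H → H) (hCcont : Continuous C)
    (hCcpt : ∀ s : Set (ℝ × H), IsBounded s → IsCompact (closure (C '' s))) :
    ∀ S : Set (ℝ × H), IsClosed S → IsBounded S →
      ∀ A : Set H, IsCompact A →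
        IsCompact ((fun p : ℝ × H => L p.1 p.2 + C p) ⁻¹' A ∩ S) :=
  stmt_9_general L T K hL hT hK hKcpt hparametrix C hCcont hCcpt
end
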